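/- arXiv:1209.1066 — 5 statements merged into one kernel-verified Lean document; each statement's English description precedes it below -/
import Mathlib

section
/- Let f, g : ℂⁿ → ℂ be holomorphic. A point z is a critical point of the real-analytic map f·conj(g) : ℂⁿ → ℂ (i.e. the real Jacobian has rank < 2) if and only if for all indices i, j one has: f(z)·g(z)·(∂f/∂zᵢ·∂g/∂zⱼ − ∂f/∂zⱼ·∂g/∂zᵢ) = 0, and |f(z)·∂g/∂zᵢ(z)| = |g(z)·∂f/∂zᵢ(z)|, and |f(z)|²·∂g/∂zᵢ(z)·conj(∂g/∂zⱼ(z)) = |g(z)|²·∂f/∂zᵢ(z)·conj(∂f/∂zⱼ(z)). -/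
/-!
The real differential of `f · conj g` at `z` is `v ↦ a v + conj (b v)` with the `ℂ`-linear
forms `a = conj (g z) • f'(z)` and `b = conj (f z) • g'(z)`. It fails to be onto `ℂ ≅ ℝ²` iff
its image lies in a real line `{w | Re (conj c * w) = 0}`; testing this on `v` and `I • v`
shows that this happens iff `a = l • b` for some `|l| = 1`. In coordinates, such an `l` exists
iff the Gram identities `aᵢ · conj aⱼ = bᵢ · conj bⱼ` hold (the third condition); the other
two conditions follow from `a = l • b`.
-/

open Complex ComplexConjugate

theorem fderiv_mul_conj_apply {E : Type*} [NormedAddCommGroup E] [NormedSpace ℝ E]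
    [NormedSpace ℂ E] [IsScalarTower ℝ ℂ E] {f g : E → ℂ} {z : E}
    (hf : DifferentiableAt ℂ f z) (hg : DifferentiableAt ℂ g z) (v : E) :
    fderiv ℝ (fun w => f w * conj (g w)) z v
      = conj (g z) * fderiv ℂ f z v + f z * conj (fderiv ℂ g z v) := by
  have hconj_g : HasFDerivAt (fun w => conj (g w))
      (conjCLE.toContinuousLinearMap.comp ((fderiv ℂ g z).restrictScalars ℝ)) z :=
    conjCLE.toContinuousLinearMap.hasFDerivAt.comp z (hg.hasFDerivAt.restrictScalars ℝ)
  have hprod : HasFDerivAt (fun w => f w * conj (g w)) _ z :=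
    (hf.hasFDerivAt.restrictScalars ℝ).mul hconj_g
  rw [hprod.fderiv]
  simp only [add_apply, smul_apply, ContinuousLinearMap.comp_apply,
    ContinuousLinearMap.coe_restrictScalars', ContinuousLinearEquiv.coe_coe, conjCLE_apply,
    smul_eq_mul]
  ring

theorem exists_ne_zero_re_conj_mul_eq_zero {M : Type*} [AddCommGroup M] [Module ℝ M]
    (T : M →ₗ[ℝ] ℂ) (hT : ¬ Function.Surjective T) :
    ∃ c : ℂ, c ≠ 0 ∧ ∀ v, (conj c * T v).re = 0 := by
  have horth : (LinearMap.range T)ᗮ ≠ ⊥ := fun h =>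
    hT (LinearMap.range_eq_top.mp (Submodule.orthogonal_eq_bot_iff.mp h))
  obtain ⟨c, hc, hc0⟩ := Submodule.exists_mem_ne_zero_of_ne_bot horth
  refine ⟨c, hc0, fun v => ?_⟩
  have h := (Submodule.mem_orthogonal _ c).mp hc (T v) ⟨v, rfl⟩
  rwa [real_inner_comm, Complex.inner, mul_comm] at h

theorem not_surjective_add_conj_iff {E : Type*} [AddCommGroup E] [Module ℝ E] [Module ℂ E]
    (a b : E →ₗ[ℂ] ℂ) (T : E →ₗ[ℝ] ℂ) (hT : ∀ v, T v = a v + conj (b v)) :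
    ¬ Function.Surjective T ↔ ∃ l : ℂ, ‖l‖ = 1 ∧ a = l • b := by
  constructor
  · intro hns
    obtain ⟨c, hc0, hc⟩ := exists_ne_zero_re_conj_mul_eq_zero T hns
    have key : ∀ v, conj c * a v = -(c * b v) := by
      intro v
      have h1 := hc v
      have h2 := hc (I • v)
      rw [hT] at h1 h2
      rw [map_smul, map_smul, smul_eq_mul, smul_eq_mul] at h2
      apply Complex.ext <;>
        simp only [mul_re, mul_im, add_re, add_im, neg_re, neg_im, conj_re, conj_im, I_re,
          I_im] at h1 h2 ⊢ <;> linarith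
    have hcc : conj c ≠ 0 := (map_ne_zero _).mpr hc0
    refine ⟨-c / conj c, ?_, LinearMap.ext fun v => ?_⟩
    · rw [norm_div, norm_neg, norm_conj, div_self (norm_ne_zero_iff.mpr hc0)]
    · rw [LinearMap.smul_apply, smul_eq_mul, div_mul_eq_mul_div, eq_div_iff hcc]
      linear_combination key v
  · rintro ⟨l, hl, rfl⟩ hsurj
    have hll : conj l * l = 1 := by
      rw [conj_mul', hl]; norm_num
    -- the image lies on the real line `{w | conj w = conj l * w}`
    have hline : ∀ v, conj (T v) = conj l * T v := by
      intro v
      rw [hT, LinearMap.smul_apply, smul_eq_mul]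
      simp only [map_add, map_mul, conj_conj]
      linear_combination (-b v) * hll
    obtain ⟨v₁, hv₁⟩ := hsurj 1
    obtain ⟨v₂, hv₂⟩ := hsurj I
    have e₁ := hline v₁
    rw [hv₁, map_one, mul_one] at e₁
    have e₂ := hline v₂
    rw [hv₂, conj_I, ← e₁, one_mul] at e₂
    have hIm := congrArg im e₂
    norm_num at hIm

theorem exists_norm_eq_one_mul_of_mul_conj_eq {ι : Type*} (x y : ι → ℂ)
    (h : ∀ i j, x i * conj (x j) = y i * conj (y j)) :
    ∃ l : ℂ, ‖l‖ = 1 ∧ ∀ i, x i = l * y i := by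
  by_cases hy : ∀ i, y i = 0
  · refine ⟨1, norm_one, fun i => ?_⟩
    have hxi : x i * conj (x i) = 0 := by rw [h, hy, zero_mul]
    rw [mul_conj, ofReal_eq_zero, normSq_eq_zero] at hxi
    rw [hxi, hy, mul_zero]
  · obtain ⟨k, hk⟩ := not_forall.mp hy
    have hnorm : ‖x k‖ = ‖y k‖ := by
      have hkk := h k k
      rw [mul_conj, mul_conj, ofReal_inj, normSq_eq_norm_sq, normSq_eq_norm_sq] at hkk
      exact (sq_eq_sq₀ (norm_nonneg _) (norm_nonneg _)).mp hkk
    have hxk : conj (x k) ≠ 0 := by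
      rw [map_ne_zero, ← norm_ne_zero_iff, hnorm, norm_ne_zero_iff]; exact hk
    refine ⟨conj (y k) / conj (x k), ?_, fun i => ?_⟩
    · rw [norm_div, norm_conj, norm_conj, hnorm, div_self (norm_ne_zero_iff.mpr hk)]
    · rw [div_mul_eq_mul_div, eq_div_iff hxk]
      linear_combination h i k

theorem critical_conditions_iff {ι : Type*} (p q : ℂ) (F G : ι → ℂ) :
    (∀ i j, p * q * (F i * G j - F j * G i) = 0 ∧ ‖p * G i‖ = ‖q * F i‖ ∧
      (‖p‖ : ℂ) ^ 2 * G i * conj (G j) = (‖q‖ : ℂ) ^ 2 * F i * conj (F j)) ↔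
    ∃ l : ℂ, ‖l‖ = 1 ∧ ∀ i, conj q * F i = l * (conj p * G i) := by
  have hp := (mul_conj' p).symm
  have hq := (mul_conj' q).symm
  constructor
  · intro H
    apply exists_norm_eq_one_mul_of_mul_conj_eq (fun i => conj q * F i) (fun i => conj p * G i)
    intro i j
    simp only [map_mul, conj_conj]
    linear_combination -(H i j).2.2 + (G i * conj (G j)) * hp - (F i * conj (F j)) * hq
  · rintro ⟨l, hl, hx⟩ i j
    have hll : l * conj l = 1 := by rw [mul_conj', hl]; norm_num
    refine ⟨?_, ?_, ?_⟩
    · have hconj : conj (p * q) * (F i * G j - F j * G i) = 0 := by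
        rw [map_mul]
        linear_combination (conj p * G j) * hx i - (conj p * G i) * hx j
      rcases mul_eq_zero.mp hconj with h | h
      · rw [(map_eq_zero _).mp h, zero_mul]
      · rw [h, mul_zero]
    · calc ‖p * G i‖ = ‖l * (conj p * G i)‖ := by
            rw [norm_mul, norm_mul, norm_mul, hl, norm_conj, one_mul]
        _ = ‖q * F i‖ := by rw [← hx, norm_mul, norm_mul, norm_conj]
    · calc (‖p‖ : ℂ) ^ 2 * G i * conj (G j)
          = (l * conj l) * ((conj p * G i) * conj (conj p * G j)) := by
            rw [hll, hp]; simp only [map_mul, conj_conj]; ring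
        _ = (conj q * F i) * conj (conj q * F j) := by
            rw [hx i, hx j]; simp only [map_mul]; ring
        _ = (‖q‖ : ℂ) ^ 2 * F i * conj (F j) := by
            rw [hq]; simp only [map_mul, conj_conj]; ring

/-- For holomorphic `f, g : ℂⁿ → ℂ`, a point `z` is a critical point of the
real-analytic map `f·conj(g)` (real differential not surjective onto `ℂ ≅ ℝ²`) iff for all
`i, j`: `f·g·(∂ᵢf·∂ⱼg − ∂ⱼf·∂ᵢg) = 0`, `|f·∂ᵢg| = |g·∂ᵢf|`, and
`|f|²·∂ᵢg·conj(∂ⱼg) = |g|²·∂ᵢf·conj(∂ⱼf)`. -/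
theorem stmt_1 (n : ℕ) (f g : (Fin n → ℂ) → ℂ)
    (hf : Differentiable ℂ f) (hg : Differentiable ℂ g) (z : Fin n → ℂ) :
    (¬ Function.Surjective (fderiv ℝ (fun w => f w * (starRingEnd ℂ) (g w)) z)) ↔
    (∀ i j : Fin n,
      f z * g z * (fderiv ℂ f z (Pi.single i 1) * fderiv ℂ g z (Pi.single j 1)
        - fderiv ℂ f z (Pi.single j 1) * fderiv ℂ g z (Pi.single i 1)) = 0 ∧
      ‖f z * fderiv ℂ g z (Pi.single i 1)‖
        = ‖g z * fderiv ℂ f z (Pi.single i 1)‖ ∧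
      ((‖f z‖ : ℂ))^2 * fderiv ℂ g z (Pi.single i 1)
          * (starRingEnd ℂ) (fderiv ℂ g z (Pi.single j 1))
        = ((‖g z‖ : ℂ))^2 * fderiv ℂ f z (Pi.single i 1)
          * (starRingEnd ℂ) (fderiv ℂ f z (Pi.single j 1))) := by
  set a : (Fin n → ℂ) →ₗ[ℂ] ℂ :=
    conj (g z) • (fderiv ℂ f z : (Fin n → ℂ) →ₗ[ℂ] ℂ)
  set b : (Fin n → ℂ) →ₗ[ℂ] ℂ :=
    conj (f z) • (fderiv ℂ g z : (Fin n → ℂ) →ₗ[ℂ] ℂ)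
  have hT : ∀ v, fderiv ℝ (fun w => f w * conj (g w)) z v = a v + conj (b v) := fun v => by
    rw [fderiv_mul_conj_apply (hf z) (hg z)]
    simp only [a, b, LinearMap.smul_apply, ContinuousLinearMap.coe_coe, smul_eq_mul, map_mul,
      conj_conj]
  have hsingle : ∀ l : ℂ, a = l • b ↔ ∀ i, a (Pi.single i 1) = l * b (Pi.single i 1) :=
    fun l => ⟨fun h i => by rw [h]; rfl,
      fun h => LinearMap.pi_ext' fun i => LinearMap.ext_ring (h i)⟩
  refine (not_surjective_add_conj_iff a b
    (fderiv ℝ (fun w => f w * conj (g w)) z : (Fin n → ℂ) →ₗ[ℝ] ℂ) hT).trans ?_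
  rw [critical_conditions_iff]
  simp only [hsingle]
  rfl
end

section
/- Let f, g : (ℂⁿ,0) → (ℂ,0) be holomorphic germs such that f·conj(g) has an isolated critical value at 0 ∈ ℂ (i.e. the critical set is contained in (fg)^{-1}(0)). Then the critical set of f·conj(g) equals Σ(f) ∪ Σ(g) ∪ (f^{-1}(0) ∩ g^{-1}(0)), where Σ(f) and Σ(g) denote the critical sets of f and g contained in their zero sets. -/
/-!
At a point `z`, the real differential of `f · conj g` is `v ↦ f z · conj (dg v) + conj (g z) · df v`.
On the zero set of `f · conj g` one of the two coefficients vanishes, so the differential is a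
multiple of the `ℂ`-linear form `df` or of the conjugate of `dg`; such a map onto `ℂ` is
surjective exactly when both the coefficient and the form are nonzero.
-/

open Function ComplexConjugate

theorem LinearMap.eq_zero_iff_apply_single_one {R M ι : Type*} [Semiring R] [AddCommMonoid M]
    [Module R M] [Finite ι] [DecidableEq ι] (L : (ι → R) →ₗ[R] M) :
    L = 0 ↔ ∀ i, L (Pi.single i 1) = 0 := by
  refine ⟨fun h i => by simp [h], fun h => (Pi.basisFun R ι).ext fun i => ?_⟩
  simpa using h i

section LinearForms

variable {E : Type*} [AddCommGroup E] [Module ℂ E]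

theorem surjective_mul_apply_iff (b : ℂ) (A : E →ₗ[ℂ] ℂ) :
    Surjective (fun v => b * A v) ↔ b ≠ 0 ∧ A ≠ 0 := by
  rw [← smul_ne_zero_iff, ← LinearMap.surjective_iff_ne_zero]
  rfl

theorem surjective_mul_conj_apply_iff (a : ℂ) (B : E →ₗ[ℂ] ℂ) :
    Surjective (fun v => a * conj (B v)) ↔ a ≠ 0 ∧ B ≠ 0 := by
  have h : (fun v => a * conj (B v)) = conj ∘ fun v => conj a * B v := by
    ext v
    simp
  rw [h, Surjective.of_comp_iff' (Involutive.bijective Complex.conj_conj),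
    surjective_mul_apply_iff]
  simp

theorem surjective_mul_conj_add_mul_iff {a b : ℂ} (hab : a = 0 ∨ b = 0) (A B : E →ₗ[ℂ] ℂ) :
    Surjective (fun v => a * conj (B v) + b * A v) ↔ (a ≠ 0 ∧ B ≠ 0) ∨ (b ≠ 0 ∧ A ≠ 0) := by
  rcases hab with rfl | rfl
  · simpa using surjective_mul_apply_iff b A
  · simpa using surjective_mul_conj_apply_iff a B

end LinearForms

theorem fderiv_mul_conj {E : Type*} [NormedAddCommGroup E] [NormedSpace ℂ E] {f g : E → ℂ}
    {z : E} (hf : DifferentiableAt ℂ f z) (hg : DifferentiableAt ℂ g z) :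
    ⇑(fderiv ℝ (fun w => f w * conj (g w)) z) =
      fun v => f z * conj (fderiv ℂ g z v) + conj (g z) * fderiv ℂ f z v := by
  have h : HasFDerivAt (fun w => f w * conj (g w)) _ z :=
    (hf.hasFDerivAt.restrictScalars ℝ).fun_mul (hg.hasFDerivAt.restrictScalars ℝ).star
  rw [h.fderiv]
  ext v
  simp

theorem stmt_2_general (n : ℕ) (f g : (Fin n → ℂ) → ℂ)
    (hf : Differentiable ℂ f) (hg : Differentiable ℂ g)
    (hicv : {z | ¬ Function.Surjective (fderiv ℝ (fun w => f w * (starRingEnd ℂ) (g w)) z)}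
      ⊆ {z | f z * (starRingEnd ℂ) (g z) = 0}) :
    {z | ¬ Function.Surjective (fderiv ℝ (fun w => f w * (starRingEnd ℂ) (g w)) z)} =
      {z | f z = 0 ∧ ∀ i, fderiv ℂ f z (Pi.single i 1) = 0} ∪
      {z | g z = 0 ∧ ∀ i, fderiv ℂ g z (Pi.single i 1) = 0} ∪
      (f ⁻¹' {0} ∩ g ⁻¹' {0}) := by
  ext z
  by_cases hzero : f z = 0 ∨ g z = 0
  · have hsurj := surjective_mul_conj_add_mul_iff (a := f z) (b := conj (g z))
      (by simpa using hzero) (fderiv ℂ f z : (Fin n → ℂ) →ₗ[ℂ] ℂ) (fderiv ℂ g z)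
    simp only [ne_eq, LinearMap.eq_zero_iff_apply_single_one, ContinuousLinearMap.coe_coe,
      map_eq_zero] at hsurj
    simp only [Set.mem_ofPred_eq, fderiv_mul_conj (hf z) (hg z), hsurj, Set.mem_union,
      Set.mem_inter_iff, Set.mem_preimage, Set.mem_singleton_iff]
    tauto
  · have hregular : z ∉ {z | ¬ Surjective (fderiv ℝ (fun w => f w * conj (g w)) z)} :=
      fun hcrit => hzero (by simpa using hicv hcrit)
    simp only [not_or] at hzero
    simp [hregular, hzero]

/-- If `f·conj(g)` has an isolated critical value at `0` (its critical set is
contained in the zero set of `f·conj g`), then the critical set of `f·conj(g)` equals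
`Σ(f) ∪ Σ(g) ∪ (f⁻¹(0) ∩ g⁻¹(0))`. -/
theorem stmt_2 (n : ℕ) (f g : (Fin n → ℂ) → ℂ)
    (hf : Differentiable ℂ f) (hg : Differentiable ℂ g) (hf0 : f 0 = 0) (hg0 : g 0 = 0)
    (hicv : {z | ¬ Function.Surjective (fderiv ℝ (fun w => f w * (starRingEnd ℂ) (g w)) z)}
      ⊆ {z | f z * (starRingEnd ℂ) (g z) = 0}) :
    {z | ¬ Function.Surjective (fderiv ℝ (fun w => f w * (starRingEnd ℂ) (g w)) z)} =
      {z | f z = 0 ∧ ∀ i, fderiv ℂ f z (Pi.single i 1) = 0} ∪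
      {z | g z = 0 ∧ ∀ i, fderiv ℂ g z (Pi.single i 1) = 0} ∪
      (f ⁻¹' {0} ∩ g ⁻¹' {0}) :=
  stmt_2_general n f g hf hg hicv
end

section
/- Let f, g : (ℂ²,0) → (ℂ,0) be holomorphic germs, and define φ : ℂ² → ℂ² by φ(x,y) = (y, f(x,y)·conj(g(x,y))). Then the critical locus of the real-analytic map φ is the set C(φ) = { (x,y) : |f(x,y)·∂g/∂x(x,y)|² = |g(x,y)·∂f/∂x(x,y)|² }. -/
/-!
At `p` the real derivative of `φ` is `(u, v) ↦ (v, D (u, v))`, which is onto iff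
`u ↦ D (u, 0)` is onto. By the chain rule, `D (u, 0) = A u + B ū` with
`A = conj (g p) · ∂f/∂x` and `B = f p · conj (∂g/∂x)`, and such a real-linear map of `ℂ`
has determinant `|A|² - |B|²`: it is invertible iff `|A| ≠ |B|`.
-/

open Complex ComplexConjugate Function

/- Up to the factor `|A|² - |B|²`, `w ↦ conj A * w - B * conj w` inverts `u ↦ A u + B ū`;
when `|A| = |B|` it instead vanishes on the image. -/
theorem conj_mul_sub_mul_conj_mul_add_mul_conj (A B u : ℂ) :
    conj A * (A * u + B * conj u) - B * conj (A * u + B * conj u)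
      = ((normSq A - normSq B : ℝ) : ℂ) * u := by
  simp only [map_add, map_mul, conj_conj, ofReal_sub, ← mul_conj]
  ring

theorem surjective_mul_add_mul_conj_iff (A B : ℂ) :
    Surjective (fun u : ℂ => A * u + B * conj u) ↔ ‖A‖ ≠ ‖B‖ := by
  constructor
  · intro hL hAB
    have hN : normSq A = normSq B := by simp only [normSq_eq_norm_sq, hAB]
    have hker : ∀ w, conj A * w - B * conj w = 0 := fun w => by
      obtain ⟨u, rfl⟩ := hL w
      rw [conj_mul_sub_mul_conj_mul_add_mul_conj, hN, sub_self, ofReal_zero, zero_mul]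
    have hB : B = 0 := by
      have h1 := hker 1
      have hI := hker I
      simp only [map_one, mul_one, conj_I] at h1 hI
      linear_combination (-I * hI - h1) / 2 + (conj A + B) / 2 * I_sq
    have hA : A = 0 := norm_eq_zero.mp (by simp [hAB, hB])
    obtain ⟨u, hu⟩ := hL 1
    simp [hA, hB] at hu
  · intro hAB w
    have hd : ((normSq A - normSq B : ℝ) : ℂ) ≠ 0 := by
      rw [ofReal_ne_zero, sub_ne_zero, normSq_eq_norm_sq, normSq_eq_norm_sq]
      exact fun h => hAB (by simpa using h)
    refine ⟨(conj A * w - B * conj w) / ((normSq A - normSq B : ℝ) : ℂ), ?_⟩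
    simp only [map_div₀, map_sub, map_mul, conj_conj, conj_ofReal]
    field_simp
    simp only [ofReal_sub, ← mul_conj]
    ring

theorem surjective_snd_prodMk_iff {E F G M : Type*} [AddCommGroup E] [AddCommGroup F]
    [AddCommGroup G] [FunLike M (E × F) G] [AddMonoidHomClass M (E × F) G] (D : M) :
    Surjective (fun w : E × F => (w.2, D w)) ↔ Surjective (fun u : E => D (u, 0)) := by
  constructor
  · intro h c
    obtain ⟨⟨u, v⟩, hw⟩ := h (0, c)
    obtain ⟨rfl, hc⟩ := Prod.mk.inj hw
    exact ⟨u, hc⟩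
  · rintro h ⟨v, c⟩
    obtain ⟨u, hu⟩ : ∃ u, D (u, 0) = c - D (0, v) := h _
    refine ⟨(u, v), ?_⟩
    show (v, D (u, v)) = (v, c)
    rw [show (u, v) = (u, 0) + (0, v) by simp, map_add, hu, sub_add_cancel]

theorem hasFDerivAt_mul_conj {E : Type*} [NormedAddCommGroup E] [NormedSpace ℂ E]
    {f g : E → ℂ} {p : E} (hf : DifferentiableAt ℂ f p) (hg : DifferentiableAt ℂ g p) :
    HasFDerivAt (fun q => f q * conj (g q))
      (f p • conjCLE.toContinuousLinearMap.comp ((fderiv ℂ g p).restrictScalars ℝ)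
        + conj (g p) • (fderiv ℂ f p).restrictScalars ℝ) p :=
  (hf.hasFDerivAt.restrictScalars ℝ).mul
    (conjCLE.toContinuousLinearMap.hasFDerivAt.comp p (hg.hasFDerivAt.restrictScalars ℝ))

theorem stmt_4_general (f g : ℂ × ℂ → ℂ) (hf : Differentiable ℂ f) (hg : Differentiable ℂ g) :
    {p : ℂ × ℂ | ¬ Function.Surjective
        (fderiv ℝ (fun q : ℂ × ℂ => (q.2, f q * (starRingEnd ℂ) (g q))) p)} =
    {p : ℂ × ℂ | ‖f p * fderiv ℂ g p (1, 0)‖^2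
        = ‖g p * fderiv ℂ f p (1, 0)‖^2} := by
  ext p
  set D := f p • conjCLE.toContinuousLinearMap.comp ((fderiv ℂ g p).restrictScalars ℝ)
    + conj (g p) • (fderiv ℂ f p).restrictScalars ℝ
  have hx : ∀ (L : ℂ × ℂ →L[ℂ] ℂ) (u : ℂ), L (u, 0) = u * L (1, 0) := fun L u => by
    rw [← smul_eq_mul, ← map_smul, Prod.smul_mk, smul_eq_mul, mul_one, smul_zero]
  have hDx : (fun u => D (u, 0)) = fun u => conj (g p) * fderiv ℂ f p (1, 0) * u
      + f p * conj (fderiv ℂ g p (1, 0)) * conj u := by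
    funext u
    simp only [D, add_apply, smul_apply, ContinuousLinearMap.comp_apply,
      ContinuousLinearMap.coe_restrictScalars', hx (fderiv ℂ f p) u, hx (fderiv ℂ g p) u,
      ContinuousLinearEquiv.coe_coe, conjCLE_apply, map_mul, smul_eq_mul]
    ring
  have hφ : ⇑(fderiv ℝ (fun q : ℂ × ℂ => (q.2, f q * conj (g q))) p)
      = fun w => (w.2, D w) := by
    rw [(hasFDerivAt_snd.prodMk (hasFDerivAt_mul_conj (hf p) (hg p))).fderiv]
    rfl
  rw [Set.mem_ofPred_eq, Set.mem_ofPred_eq, hφ, surjective_snd_prodMk_iff, hDx,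
    surjective_mul_add_mul_conj_iff, not_not, sq_eq_sq₀ (norm_nonneg _) (norm_nonneg _)]
  simp only [norm_mul, norm_conj]
  exact eq_comm

/-- For holomorphic germs `f, g : (ℂ²,0) → (ℂ,0)` and
`φ(x,y) = (y, f(x,y)·conj(g(x,y)))`, the critical locus of the real-analytic map `φ` is
`C(φ) = {(x,y) : |f·∂g/∂x|² = |g·∂f/∂x|²}`. -/
theorem stmt_4 (f g : ℂ × ℂ → ℂ) (hf : Differentiable ℂ f) (hg : Differentiable ℂ g)
    (hf0 : f 0 = 0) (hg0 : g 0 = 0) :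
    {p : ℂ × ℂ | ¬ Function.Surjective
        (fderiv ℝ (fun q : ℂ × ℂ => (q.2, f q * (starRingEnd ℂ) (g q))) p)} =
    {p : ℂ × ℂ | ‖f p * fderiv ℂ g p (1, 0)‖^2
        = ‖g p * fderiv ℂ f p (1, 0)‖^2} :=
  stmt_4_general f g hf hg
end

section
/- Let f, g : (ℂ²,0) → (ℂ,0) be holomorphic with g depending only on the second variable y, i.e. g(x,y) = g'(y). Let φ(x,y) = (y, f(x,y)·conj(g(x,y))). Then the critical locus of φ equals {g = 0} ∪ {∂f/∂x = 0}, and hence is a complex analytic curve in ℂ². -/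
/-!
Since the first component of `φ` is `y`, its real differential is surjective exactly when the
`x`-partial derivative of the second component `f · conj g` is. As `g` does not depend on `x`,
that partial derivative is `u ↦ conj g · ∂f/∂x · u`, which is onto `ℂ` unless `g = 0` or
`∂f/∂x = 0`.
-/

open Function

theorem surjective_snd_prod_iff {E F G M : Type*} [AddCommGroup E] [AddCommGroup F]
    [AddCommGroup G] [FunLike M (E × F) G] [AddMonoidHomClass M (E × F) G] (S : M) :
    Surjective (fun x : E × F => (x.2, S x)) ↔ Surjective (fun u : E => S (u, 0)) := by
  constructor
  · intro h w
    obtain ⟨⟨u, v⟩, huv⟩ := h (0, w)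
    obtain ⟨rfl, hS⟩ := Prod.ext_iff.mp huv
    exact ⟨u, hS⟩
  · rintro h ⟨v, w⟩
    obtain ⟨u, hu⟩ := h (w - S (0, v))
    refine ⟨(u, v), Prod.ext rfl ?_⟩
    have hsplit : ((u, v) : E × F) = (u, 0) + (0, v) := by simp
    simp only [hsplit, map_add, hu, sub_add_cancel]

theorem fderiv_comp_snd_apply_inl {𝕜 E F G : Type*} [NontriviallyNormedField 𝕜]
    [NormedAddCommGroup E] [NormedSpace 𝕜 E] [NormedAddCommGroup F] [NormedSpace 𝕜 F]
    [NormedAddCommGroup G] [NormedSpace 𝕜 G] {h : F → G} {p : E × F}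
    (hh : DifferentiableAt 𝕜 h p.2) (u : E) :
    fderiv 𝕜 (fun q : E × F => h q.2) p (u, 0) = 0 := by
  rw [fderiv_fun_comp p hh differentiableAt_snd, fderiv_snd]
  simp

theorem fderiv_mul_conj_comp_snd_apply_inl {f : ℂ × ℂ → ℂ} {g : ℂ → ℂ} {p : ℂ × ℂ}
    (hf : DifferentiableAt ℂ f p) (hg : DifferentiableAt ℂ g p.2) (u : ℂ) :
    fderiv ℝ (fun q : ℂ × ℂ => f q * starRingEnd ℂ (g q.2)) p (u, 0) =
      starRingEnd ℂ (g p.2) * fderiv ℂ f p (1, 0) * u := by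
  have hconj : DifferentiableAt ℝ (fun z => starRingEnd ℂ (g z)) p.2 :=
    Complex.conjCLE.differentiableAt.comp p.2 (hg.restrictScalars ℝ)
  have hconj_snd : DifferentiableAt ℝ (fun q : ℂ × ℂ => starRingEnd ℂ (g q.2)) p :=
    hconj.comp p differentiableAt_snd
  rw [fderiv_fun_mul (hf.restrictScalars ℝ) hconj_snd]
  have hinl : ((u, 0) : ℂ × ℂ) = u • (1, 0) := by simp
  rw [add_apply, smul_apply, smul_apply,
    fderiv_comp_snd_apply_inl hconj, hf.fderiv_restrictScalars ℝ, hinl,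
    ContinuousLinearMap.coe_restrictScalars', map_smul]
  simp only [smul_eq_mul, mul_zero, zero_add]
  ring

theorem mul_left_surjective₀_iff {G₀ : Type*} [GroupWithZero G₀] {a : G₀} :
    Surjective (fun g => a * g) ↔ a ≠ 0 := by
  refine ⟨fun h ha => ?_, mul_left_surjective₀⟩
  obtain ⟨g, hg⟩ := h 1
  simp [ha] at hg

theorem stmt_5_general (f : ℂ × ℂ → ℂ) (g' : ℂ → ℂ)
    (hf : Differentiable ℂ f) (hg' : Differentiable ℂ g') :
    {p : ℂ × ℂ | ¬ Function.Surjective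
        (fderiv ℝ (fun q : ℂ × ℂ => (q.2, f q * (starRingEnd ℂ) (g' q.2))) p)} =
    {p : ℂ × ℂ | g' p.2 = 0} ∪ {p : ℂ × ℂ | fderiv ℂ f p (1, 0) = 0} := by
  ext p
  set h := fun q : ℂ × ℂ => f q * starRingEnd ℂ (g' q.2)
  have hh : DifferentiableAt ℝ h p :=
    (hf p).restrictScalars ℝ |>.mul
      ((Complex.conjCLE.differentiableAt.comp _ ((hg' p.2).restrictScalars ℝ)).comp p
        differentiableAt_snd)
  have hφ : fderiv ℝ (fun q : ℂ × ℂ => (q.2, h q)) p =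
      (ContinuousLinearMap.snd ℝ ℂ ℂ).prod (fderiv ℝ h p) := by
    rw [DifferentiableAt.fderiv_prodMk differentiableAt_snd hh, fderiv_snd]
  have hpartial : (fun u : ℂ => fderiv ℝ h p (u, 0)) =
      fun u => starRingEnd ℂ (g' p.2) * fderiv ℂ f p (1, 0) * u :=
    funext (fderiv_mul_conj_comp_snd_apply_inl (hf p) (hg' p.2))
  change ¬ Surjective (fderiv ℝ (fun q : ℂ × ℂ => (q.2, h q)) p) ↔
    g' p.2 = 0 ∨ fderiv ℂ f p (1, 0) = 0
  rw [hφ]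
  change ¬ Surjective (fun x : ℂ × ℂ => (x.2, fderiv ℝ h p x)) ↔ _
  rw [surjective_snd_prod_iff, hpartial, mul_left_surjective₀_iff, not_not, mul_eq_zero,
    map_eq_zero]

/-- For holomorphic `f : (ℂ²,0) → (ℂ,0)` and `g(x,y) = g'(y)` depending only on
`y`, the critical locus of `φ(x,y) = (y, f·conj g)` equals `{g = 0} ∪ {∂f/∂x = 0}`,
a complex analytic curve in `ℂ²`. -/
theorem stmt_5 (f : ℂ × ℂ → ℂ) (g' : ℂ → ℂ)
    (hf : Differentiable ℂ f) (hg' : Differentiable ℂ g')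
    (hf0 : f 0 = 0) (hg0 : g' 0 = 0) :
    {p : ℂ × ℂ | ¬ Function.Surjective
        (fderiv ℝ (fun q : ℂ × ℂ => (q.2, f q * (starRingEnd ℂ) (g' q.2))) p)} =
    {p : ℂ × ℂ | g' p.2 = 0} ∪ {p : ℂ × ℂ | fderiv ℂ f p (1, 0) = 0} :=
  stmt_5_general f g' hf hg'
end

section
/- Let π : F → D be a finite covering map of smooth surfaces away from a closed set, i.e. π : F \ π^{-1}(Q) → D \ Q is a finite covering with Q ⊂ D closed, and let v be a vector field on D that vanishes on Q and whose flow satisfies lim_{τ→∞} q(τ, u) ∈ Q for every u ∈ ∂D. Let ṽ be the lift of v to F (set equal to 0 on P := π^{-1}(Q)). Then for every z ∈ ∂F, the flow q̃ of ṽ satisfies: lim_{τ→∞} q̃(τ, z) exists and lies in P. -/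
/-!
By compactness the lifted trajectory has a cluster point `y`, and `π y = p` because the projected
trajectory converges to `p`. Eventually the trajectory stays in the union of small balls around the
finitely many points of `π⁻¹(p)`; once the balls are disjoint, connectedness of `[T, ∞)` traps the
trajectory in the ball around `y`, which it visits arbitrarily late.
-/

open Filter Metric Set Topology

theorem Continuous.eventually_mem_of_frequently_of_subset_union
    {α X : Type*} [ConditionallyCompleteLinearOrder α] [DenselyOrdered α] [TopologicalSpace α]
    [OrderTopology α] [TopologicalSpace X] {γ : α → X} (hγ : Continuous γ) {U V : Set X}
    (hU : IsOpen U) (hV : IsOpen V) (hUV : Disjoint U V)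
    (hev : ∀ᶠ t in atTop, γ t ∈ U ∪ V) (hfreq : ∃ᶠ t in atTop, γ t ∈ U) :
    ∀ᶠ t in atTop, γ t ∈ U := by
  obtain ⟨T, hT⟩ := eventually_atTop.1 hev
  obtain ⟨t, htU, htT⟩ := (hfreq.and_eventually (eventually_ge_atTop T)).exists
  have hsub : γ '' Ici T ⊆ U :=
    (isPreconnected_Ici.image γ hγ.continuousOn).subset_left_of_subset_union hU hV hUV
      (image_subset_iff.2 hT) ⟨γ t, mem_image_of_mem γ htT, htU⟩
  exact eventually_atTop.2 ⟨T, fun s hs => hsub (mem_image_of_mem γ hs)⟩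

theorem Set.Finite.exists_pos_le_dist {X : Type*} [MetricSpace X] {S : Set X} (hS : S.Finite)
    (y : X) : ∃ r > 0, ∀ y' ∈ S, y' ≠ y → r ≤ dist y y' := by
  have hnhds : (S \ {y})ᶜ ∈ 𝓝 y :=
    (hS.sdiff.isClosed).isOpen_compl.mem_nhds fun h => h.2 rfl
  obtain ⟨r, hr, hball⟩ := Metric.mem_nhds_iff.1 hnhds
  refine ⟨r, hr, fun y' hy' hne => not_lt.1 fun hlt => hball ?_ ⟨hy', hne⟩⟩
  rwa [mem_ball']

theorem disjoint_ball_biUnion_ball {X : Type*} [PseudoMetricSpace X] {S : Set X} {y : X} {δ : ℝ}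
    (hsep : ∀ y' ∈ S, 2 * δ ≤ dist y y') : Disjoint (ball y δ) (⋃ y' ∈ S, ball y' δ) := by
  simp only [disjoint_iUnion_right]
  intro y' hy'
  exact ball_disjoint_ball (by linarith [hsep y' hy'])

theorem tendsto_of_mapClusterPt_of_eventually_near_finite {α X : Type*}
    [ConditionallyCompleteLinearOrder α] [DenselyOrdered α] [TopologicalSpace α]
    [OrderTopology α] [MetricSpace X] {γ : α → X} (hγ : Continuous γ) {S : Set X}
    (hS : S.Finite) {y : X} (hy : MapClusterPt y atTop γ)
    (hnear : ∀ δ > 0, ∀ᶠ t in atTop, γ t ∈ ⋃ y' ∈ S, ball y' δ) :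
    Tendsto γ atTop (𝓝 y) := by
  rw [Metric.tendsto_nhds]
  intro ε hε
  obtain ⟨r, hr, hsep⟩ := hS.exists_pos_le_dist y
  set δ := min ε (r / 2)
  have hδ : 0 < δ := lt_min hε (half_pos hr)
  have hsep' : ∀ y' ∈ S \ {y}, 2 * δ ≤ dist y y' := fun y' hy' =>
    le_trans (by linarith [min_le_right ε (r / 2)]) (hsep y' hy'.1 hy'.2)
  have hcover : ⋃ y' ∈ S, ball y' δ ⊆ ball y δ ∪ ⋃ y' ∈ S \ {y}, ball y' δ := by
    intro x hx
    obtain ⟨y', hy'S, hx⟩ := mem_iUnion₂.1 hx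
    by_cases h : y' = y
    · exact Or.inl (h ▸ hx)
    · exact Or.inr (mem_iUnion₂.2 ⟨y', ⟨hy'S, h⟩, hx⟩)
  have hδball := hγ.eventually_mem_of_frequently_of_subset_union isOpen_ball
    (isOpen_biUnion fun _ _ => isOpen_ball) (disjoint_ball_biUnion_ball hsep')
    ((hnear δ hδ).mono fun t ht => hcover ht)
    (mapClusterPt_iff_frequently.1 hy _ (ball_mem_nhds y hδ))
  exact hδball.mono fun t ht => lt_of_lt_of_le (mem_ball.1 ht) (min_le_left _ _)

theorem MapClusterPt.eq_of_tendsto_comp {ι X Y : Type*} [TopologicalSpace X] [TopologicalSpace Y]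
    [T2Space Y] {l : Filter ι} {f : ι → X} {g : X → Y} {x : X} {y : Y}
    (hx : MapClusterPt x l f) (hg : ContinuousAt g x) (hlim : Tendsto (g ∘ f) l (𝓝 y)) :
    g x = y :=
  eq_of_nhds_neBot (ClusterPt.mono (hx.continuousAt_comp hg) hlim)

theorem stmt_8_general {F D : Type*} [MetricSpace F] [MetricSpace D] [CompactSpace F]
    (π : F → D) (hπ : Continuous π) (Q : Set D)
    (q : ℝ → D → D) (qt : ℝ → F → F)
    (hqcont : ∀ z : F, Continuous (fun τ => qt τ z))
    (hcomm : ∀ τ : ℝ, 0 ≤ τ → ∀ z, π (qt τ z) = q τ (π z))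
    (hfib : ∀ p ∈ Q, (π ⁻¹' {p}).Finite)
    (hloc : ∀ p ∈ Q, ∀ ε > (0:ℝ), ∃ U ∈ nhds p, π ⁻¹' U ⊆ ⋃ y ∈ π ⁻¹' {p}, ball y ε)
    (z : F) (p : D) (hp : p ∈ Q)
    (hlim : Tendsto (fun τ => q τ (π z)) atTop (nhds p)) :
    ∃ pt ∈ π ⁻¹' Q, Tendsto (fun τ => qt τ z) atTop (nhds pt) := by
  have hlift : Tendsto (π ∘ fun τ => qt τ z) atTop (𝓝 p) :=
    hlim.congr' (eventually_atTop.2 ⟨0, fun τ hτ => (hcomm τ hτ z).symm⟩)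
  obtain ⟨y, hy⟩ := exists_clusterPt_of_compactSpace (map (fun τ => qt τ z) atTop)
  have hπy : π y = p := MapClusterPt.eq_of_tendsto_comp hy hπ.continuousAt hlift
  refine ⟨y, show π y ∈ Q from hπy ▸ hp, ?_⟩
  refine tendsto_of_mapClusterPt_of_eventually_near_finite (hqcont z) (hfib p hp) hy
    fun δ hδ => ?_
  obtain ⟨U, hU, hUsub⟩ := hloc p hp δ hδ
  exact (hlift.eventually_mem hU).mono fun _ h => hUsub h

/-- Let `π : F → D` restrict to a finite covering off a closed set `Q ⊆ D`, let
`v` be a vector field on `D` null on `Q` whose flow `q` satisfies `lim_{τ→∞} q(τ,u) ∈ Q`, and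
let `q̃` be the flow of the lift `ṽ` of `v` to `F`, so that `π ∘ q̃(τ,·) = q(τ, π ·)`. Then for
every `z ∈ ∂F` the limit `lim_{τ→∞} q̃(τ, z)` exists and lies in `P = π⁻¹(Q)`. The covering
structure near `Q` is encoded by finiteness of fibres over `Q` together with the fact that the
preimage of a small neighbourhood of `p ∈ Q` decomposes into small neighbourhoods of the
finitely many points of `π⁻¹(p)`. -/
theorem stmt_8 {F D : Type*} [MetricSpace F] [MetricSpace D] [CompactSpace F]
    (π : F → D) (hπ : Continuous π) (Q : Set D) (hQ : IsClosed Q)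
    (q : ℝ → D → D) (qt : ℝ → F → F)
    (hqcont : ∀ z : F, Continuous (fun τ => qt τ z))
    (hcomm : ∀ τ : ℝ, 0 ≤ τ → ∀ z, π (qt τ z) = q τ (π z))
    (hfib : ∀ p ∈ Q, (π ⁻¹' {p}).Finite)
    (hloc : ∀ p ∈ Q, ∀ ε > (0:ℝ), ∃ U ∈ nhds p, π ⁻¹' U ⊆ ⋃ y ∈ π ⁻¹' {p}, ball y ε)
    (z : F) (p : D) (hp : p ∈ Q)
    (hlim : Tendsto (fun τ => q τ (π z)) atTop (nhds p)) :
    ∃ pt ∈ π ⁻¹' Q, Tendsto (fun τ => qt τ z) atTop (nhds pt) :=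
  stmt_8_general π hπ Q q qt hqcont hcomm hfib hloc z p hp hlim
end
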